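/- Let B > 0, let 0 < γ₂ < π/2, and let (U, ψ) be a solution of the capillary ODE system with parameter B on [−1, 1] such that U(1) > 0 and cos ψ(ξ) ≥ cos ψ(1) for every ξ ∈ [−1, 1]. Set λ = sin ψ(1) − sin ψ(−1) and assume λ > 0. Then U(ξ)² ≤ U(1)² for all ξ, and λ² ≤ 4B²·U(1)². Consequently, if λ²/(4B) ≥ 2(1 − sin γ₂), then the meniscus height on Π₂ satisfies U(1) ≥ √((2/B)(1 − sin γ₂)), which is the height of the zero-force barrier I on Π₂. (Estimates (24), (26), (27) of the paper: for all sufficiently small separations the meniscus lies above the barrier I and the configuration is attracting.) -/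

import Mathlib

open Real Set

/-- A solution of the (normalized) capillary ODE system with parameter `B` on a set `I ⊆ ℝ`. -/
def IsCapillarySol (B : ℝ) (I : Set ℝ) (U ψ : ℝ → ℝ) : Prop :=
  ∀ ξ ∈ I, ψ ξ ∈ Set.Ioo (-(π / 2)) (π / 2) ∧
    HasDerivAt (fun t => Real.sin (ψ t)) (B * U ξ) ξ ∧
    HasDerivAt U (Real.tan (ψ ξ)) ξ

/-! The system conserves `cos ψ + (B/2) U²`, so `U²` is largest where `cos ψ` is smallest, which
is at `ξ = 1`. Hence `|(sin ψ)'| = B|U| ≤ B U(1)` on `[-1, 1]` and the mean value inequality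
gives `λ ≤ 2 B U(1)`; the barrier estimate is then arithmetic. -/

/-- The first integral `cos ψ + (B/2) U²`. Since `ψ` itself need not be differentiable, `cos ψ` is
written as `√(1 - sin² ψ)`, which agrees with it while `|ψ| < π/2`. -/
noncomputable def capillaryEnergy (B : ℝ) (U ψ : ℝ → ℝ) (t : ℝ) : ℝ :=
  √(1 - sin (ψ t) ^ 2) + B / 2 * U t ^ 2

namespace IsCapillarySol

variable {B : ℝ} {I : Set ℝ} {U ψ : ℝ → ℝ}

theorem capillaryEnergy_eq (h : IsCapillarySol B I U ψ) {ξ : ℝ} (hξ : ξ ∈ I) :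
    capillaryEnergy B U ψ ξ = cos (ψ ξ) + B / 2 * U ξ ^ 2 := by
  obtain ⟨hlo, hhi⟩ := (h ξ hξ).1
  rw [capillaryEnergy, ← cos_eq_sqrt_one_sub_sin_sq hlo.le hhi.le]

theorem hasDerivAt_capillaryEnergy (h : IsCapillarySol B I U ψ) {ξ : ℝ} (hξ : ξ ∈ I) :
    HasDerivAt (capillaryEnergy B U ψ) 0 ξ := by
  obtain ⟨hψ, hsin, hU⟩ := h ξ hξ
  have hcos_pos : 0 < cos (ψ ξ) := cos_pos_of_mem_Ioo hψ
  have hcos : √(1 - sin (ψ ξ) ^ 2) = cos (ψ ξ) :=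
    (cos_eq_sqrt_one_sub_sin_sq hψ.1.le hψ.2.le).symm
  have hne : 1 - sin (ψ ξ) ^ 2 ≠ 0 := by
    rw [← cos_sq']
    positivity
  have hinner : HasDerivAt (fun t => 1 - sin (ψ t) ^ 2) (-(2 * sin (ψ ξ) * (B * U ξ))) ξ := by
    simpa using (hsin.pow 2).const_sub 1
  have hquad : HasDerivAt (fun t => B / 2 * U t ^ 2) (B / 2 * (2 * U ξ * tan (ψ ξ))) ξ := by
    simpa using (hU.pow 2).const_mul (B / 2)
  refine ((hinner.sqrt hne).add hquad).congr_deriv ?_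
  rw [hcos, tan_eq_sin_div_cos]
  field_simp
  ring

theorem capillaryEnergy_eq_of_mem (h : IsCapillarySol B I U ψ) (hI : Convex ℝ I)
    {x y : ℝ} (hx : x ∈ I) (hy : y ∈ I) :
    capillaryEnergy B U ψ y = capillaryEnergy B U ψ x := by
  have hle := hI.norm_image_sub_le_of_norm_hasDerivWithin_le
    (fun t ht => (h.hasDerivAt_capillaryEnergy ht).hasDerivWithinAt)
    (fun _ _ => le_of_eq norm_zero) hx hy
  rw [zero_mul, norm_le_zero_iff, sub_eq_zero] at hle
  exact hle

theorem sq_le_sq_of_cos_le (h : IsCapillarySol B I U ψ) (hB : 0 < B) (hI : Convex ℝ I)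
    {a : ℝ} (ha : a ∈ I) (hcos : ∀ ξ ∈ I, cos (ψ a) ≤ cos (ψ ξ)) {ξ : ℝ} (hξ : ξ ∈ I) :
    U ξ ^ 2 ≤ U a ^ 2 := by
  have hE := h.capillaryEnergy_eq_of_mem hI ha hξ
  rw [h.capillaryEnergy_eq hξ, h.capillaryEnergy_eq ha] at hE
  have := hcos ξ hξ
  nlinarith

theorem abs_sin_sub_le (h : IsCapillarySol B I U ψ) (hI : Convex ℝ I) {M : ℝ}
    (hM : ∀ ξ ∈ I, |U ξ| ≤ M) {x y : ℝ} (hx : x ∈ I) (hy : y ∈ I) :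
    |sin (ψ y) - sin (ψ x)| ≤ |B| * M * |y - x| := by
  refine hI.norm_image_sub_le_of_norm_hasDerivWithin_le
    (fun t ht => (h t ht).2.1.hasDerivWithinAt) (fun t ht => ?_) hx hy
  rw [norm_mul, norm_eq_abs, norm_eq_abs]
  exact mul_le_mul_of_nonneg_left (hM t ht) (abs_nonneg B)

end IsCapillarySol

theorem sqrt_le_of_sq_div_le {B lam u c : ℝ} (hB : 0 < B) (hu : 0 ≤ u)
    (hlam : lam ^ 2 ≤ 4 * B ^ 2 * u ^ 2) (hc : c ≤ lam ^ 2 / (4 * B)) :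
    √(c / B) ≤ u := by
  have hcu : c / B ≤ u ^ 2 := by
    rw [div_le_iff₀ hB]
    calc c ≤ lam ^ 2 / (4 * B) := hc
      _ ≤ 4 * B ^ 2 * u ^ 2 / (4 * B) := by gcongr
      _ = u ^ 2 * B := by field_simp
  calc √(c / B) ≤ √(u ^ 2) := sqrt_le_sqrt hcu
    _ = u := sqrt_sq hu

theorem capillary_above_barrier_I_general
    (B : ℝ) (hB : 0 < B) (γ₂ : ℝ)
    (U ψ : ℝ → ℝ) (h : IsCapillarySol B (Set.Icc (-1) 1) U ψ)
    (hU1 : 0 < U 1)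
    (hcos : ∀ ξ ∈ Set.Icc (-1 : ℝ) 1, Real.cos (ψ ξ) ≥ Real.cos (ψ 1))
    (lam : ℝ) (hlam : lam = Real.sin (ψ 1) - Real.sin (ψ (-1))) :
    (∀ ξ ∈ Set.Icc (-1 : ℝ) 1, U ξ ^ 2 ≤ U 1 ^ 2) ∧
    lam ^ 2 ≤ 4 * B ^ 2 * U 1 ^ 2 ∧
    (lam ^ 2 / (4 * B) ≥ 2 * (1 - Real.sin γ₂) →
      U 1 ≥ Real.sqrt (2 / B * (1 - Real.sin γ₂))) := by
  have hmem1 : (1 : ℝ) ∈ Icc (-1 : ℝ) 1 := by norm_num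
  have hmem_neg1 : (-1 : ℝ) ∈ Icc (-1 : ℝ) 1 := by norm_num
  have hU : ∀ ξ ∈ Icc (-1 : ℝ) 1, U ξ ^ 2 ≤ U 1 ^ 2 := fun ξ hξ =>
    h.sq_le_sq_of_cos_le hB (convex_Icc _ _) hmem1 hcos hξ
  have hlam_abs : |lam| ≤ 2 * B * U 1 := by
    have := h.abs_sin_sub_le (convex_Icc _ _)
      (fun ξ hξ => abs_le_of_sq_le_sq (hU ξ hξ) hU1.le) hmem_neg1 hmem1
    rw [abs_of_pos hB] at this
    norm_num [← hlam] at this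
    linarith
  have hlam_sq : lam ^ 2 ≤ 4 * B ^ 2 * U 1 ^ 2 := by
    nlinarith [sq_abs lam, abs_nonneg lam]
  refine ⟨hU, hlam_sq, fun hbarrier => ?_⟩
  rw [div_mul_eq_mul_div]
  exact sqrt_le_of_sq_div_le hB hU1.le hlam_sq hbarrier

/-- Estimates (24), (26), (27): if the maximum of cos ψ is attained at ξ = 1 (on Π₂) with
U(1) > 0, then U² ≤ U(1)² throughout and λ² ≤ 4B²U(1)²; consequently if λ²/(4B) ≥ 2(1 − sin γ₂)
the meniscus height on Π₂ is at least that of the zero-force barrier I,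
namely √((2/B)(1 − sin γ₂)). -/
theorem capillary_above_barrier_I
    (B : ℝ) (hB : 0 < B) (γ₂ : ℝ) (hγ₂ : 0 < γ₂) (hγ₂' : γ₂ < π / 2)
    (U ψ : ℝ → ℝ) (h : IsCapillarySol B (Set.Icc (-1) 1) U ψ)
    (hU1 : 0 < U 1)
    (hcos : ∀ ξ ∈ Set.Icc (-1 : ℝ) 1, Real.cos (ψ ξ) ≥ Real.cos (ψ 1))
    (lam : ℝ) (hlam : lam = Real.sin (ψ 1) - Real.sin (ψ (-1))) (hlampos : 0 < lam) :
    (∀ ξ ∈ Set.Icc (-1 : ℝ) 1, U ξ ^ 2 ≤ U 1 ^ 2) ∧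
    lam ^ 2 ≤ 4 * B ^ 2 * U 1 ^ 2 ∧
    (lam ^ 2 / (4 * B) ≥ 2 * (1 - Real.sin γ₂) →
      U 1 ≥ Real.sqrt (2 / B * (1 - Real.sin γ₂))) :=
  capillary_above_barrier_I_general B hB γ₂ U ψ h hU1 hcos lam hlam
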